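/- arXiv:1601.07141 — 3 statements merged into one kernel-verified Lean document; each statement's English description precedes it below -/
import Mathlib

section
/- Let β > 0, γ > 0 with β + γ > 1. Then there exists C > 0 such that for every T > 2 and every s with 1 < s < T, the integral h(s) = ∫_{1/2}^T t^{-β} |t - s|^{-γ'} dt (interpreted with the integrand bounded near t = s by a fixed constant on the interval (s-1, s+1)) satisfies h(s) ≤ C · log T · ( s^{1-β-γ} + s^{-β} + s^{-γ} ). -/
open MeasureTheory Real

/-
Off the band |t - s| < 1, let u ≤ v be t and |t - s| in some order; as t + |t - s| ≥ s,
v ≥ s / 2. With {a, b} = {β, γ}, the integrand is v^(-a) u^(-b) = u⁻¹ v^(-a) u^(1-b), where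
u^(1-b) ≤ v^(1-b) + 2^(b-1) (as u ≥ 1/2) and v^(1-a-b) ≤ (s/2)^(1-a-b) (as a + b ≥ 1). So there the
integrand is O(P(s) (t⁻¹ + |t - s|⁻¹)) with P(s) = s^(1-β-γ) + s^(-β) + s^(-γ). On the band
t ≥ s / 4, so the integrand is O(A s^(-β)). Altogether it is O(P(s) (t⁻¹ + (1 + |t - s|)⁻¹)),
whose integral over [1/2, T] is O(log T).
-/

lemma intervalIntegral_mono_on_of_nonneg {f g : ℝ → ℝ} {a b : ℝ} (hab : a ≤ b)
    (hf : ∀ x ∈ Set.Ioc a b, 0 ≤ f x) (hg : IntervalIntegrable g volume a b)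
    (hfg : ∀ x ∈ Set.Ioc a b, f x ≤ g x) :
    ∫ x in a..b, f x ≤ ∫ x in a..b, g x := by
  rw [intervalIntegral.integral_of_le hab, intervalIntegral.integral_of_le hab]
  exact integral_mono_of_nonneg ((ae_restrict_iff' measurableSet_Ioc).2 (ae_of_all _ hf)) hg.1
    ((ae_restrict_iff' measurableSet_Ioc).2 (ae_of_all _ hfg))

lemma rpow_le_rpow_mul_of_le_mul {c x s t : ℝ} (hc : 0 < c) (hx : x ≤ 0) (hs : 0 < s)
    (hst : s ≤ c * t) : t ^ x ≤ c ^ (-x) * s ^ x := by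
  calc t ^ x ≤ (s / c) ^ x :=
        rpow_le_rpow_of_nonpos (div_pos hs hc) ((div_le_iff₀' hc).2 hst) hx
    _ = c ^ (-x) * s ^ x := by rw [div_rpow hs.le hc.le, rpow_neg hc.le, div_eq_inv_mul]

lemma rpow_neg_mul_rpow_neg_le {a b s t u : ℝ} (ha : 0 ≤ a) (hab : 1 ≤ a + b) (hs : 0 < s)
    (hu : 1 / 2 ≤ u) (hut : u ≤ t) (hst : s ≤ 2 * t) :
    t ^ (-a) * u ^ (-b) ≤ 2 ^ (a + b - 1) * (s ^ (1 - a - b) + s ^ (-a)) * u⁻¹ := by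
  have hu0 : 0 < u := by linarith
  have ht0 : 0 < t := by linarith
  have hu_pow : u ^ (1 - b) ≤ t ^ (1 - b) + 2 ^ (b - 1) := by
    rcases le_total b 1 with hb | hb
    · have := rpow_le_rpow hu0.le hut (by linarith : 0 ≤ 1 - b)
      linarith [rpow_nonneg (by norm_num : (0 : ℝ) ≤ 2) (b - 1)]
    · have : u ^ (1 - b) ≤ (1 / 2) ^ (1 - b) :=
        rpow_le_rpow_of_nonpos (by norm_num) hu (by linarith)
      rw [one_div, inv_rpow (by norm_num), ← rpow_neg (by norm_num), neg_sub] at this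
      linarith [rpow_nonneg ht0.le (1 - b)]
  have ht_pow : t ^ (1 - a - b) ≤ 2 ^ (a + b - 1) * s ^ (1 - a - b) := by
    have := rpow_le_rpow_mul_of_le_mul two_pos (by linarith : 1 - a - b ≤ 0) hs hst
    rwa [show -(1 - a - b) = a + b - 1 by ring] at this
  have ht_pow' : t ^ (-a) ≤ 2 ^ a * s ^ (-a) := by
    simpa using rpow_le_rpow_mul_of_le_mul two_pos (neg_nonpos.2 ha) hs hst
  calc t ^ (-a) * u ^ (-b) = t ^ (-a) * u ^ (1 - b) * u⁻¹ := by
        rw [mul_assoc, ← rpow_neg_one, ← rpow_add hu0]; ring_nf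
    _ ≤ t ^ (-a) * (t ^ (1 - b) + 2 ^ (b - 1)) * u⁻¹ := by gcongr
    _ = (t ^ (1 - a - b) + 2 ^ (b - 1) * t ^ (-a)) * u⁻¹ := by
        rw [mul_add, ← rpow_add ht0]; ring_nf
    _ ≤ (2 ^ (a + b - 1) * s ^ (1 - a - b) + 2 ^ (b - 1) * (2 ^ a * s ^ (-a))) * u⁻¹ := by
        gcongr
    _ = 2 ^ (a + b - 1) * (s ^ (1 - a - b) + s ^ (-a)) * u⁻¹ := by
        rw [← mul_assoc, ← rpow_add two_pos]; ring_nf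

lemma rpow_neg_mul_abs_sub_rpow_neg_le {β γ s t : ℝ} (hβ : 0 ≤ β) (hγ : 0 ≤ γ)
    (hβγ : 1 ≤ β + γ) (hs : 0 < s) (ht : 1 / 2 ≤ t) (hts : 1 ≤ |t - s|) :
    t ^ (-β) * |t - s| ^ (-γ) ≤
      2 ^ (β + γ - 1) * (s ^ (1 - β - γ) + s ^ (-β) + s ^ (-γ)) *
        (t⁻¹ + |t - s|⁻¹) := by
  have hsum : s ≤ t + |t - s| := by linarith [neg_abs_le (t - s)]
  have hX := rpow_nonneg hs.le (1 - β - γ)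
  have hY := rpow_nonneg hs.le (-β)
  have hZ := rpow_nonneg hs.le (-γ)
  have ht' : 0 ≤ t⁻¹ := by positivity
  have hu' : 0 ≤ |t - s|⁻¹ := by positivity
  rcases le_total |t - s| t with hut | htu
  · calc t ^ (-β) * |t - s| ^ (-γ)
          ≤ 2 ^ (β + γ - 1) * (s ^ (1 - β - γ) + s ^ (-β)) * |t - s|⁻¹ :=
            rpow_neg_mul_rpow_neg_le hβ hβγ hs (by linarith) hut (by linarith)
      _ ≤ _ := by gcongr (2 : ℝ) ^ (β + γ - 1) * ?_ * ?_ <;> linarith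
  · calc t ^ (-β) * |t - s| ^ (-γ) = |t - s| ^ (-γ) * t ^ (-β) := mul_comm _ _
      _ ≤ 2 ^ (γ + β - 1) * (s ^ (1 - γ - β) + s ^ (-γ)) * t⁻¹ :=
            rpow_neg_mul_rpow_neg_le hγ (by linarith) hs ht htu (by linarith)
      _ = 2 ^ (β + γ - 1) * (s ^ (1 - β - γ) + s ^ (-γ)) * t⁻¹ := by ring_nf
      _ ≤ _ := by gcongr (2 : ℝ) ^ (β + γ - 1) * ?_ * ?_ <;> linarith

lemma rpow_neg_mul_ite_le {β γ A s t : ℝ} (hβ : 0 ≤ β) (hγ : 0 ≤ γ) (hβγ : 1 ≤ β + γ)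
    (hA : 0 ≤ A) (hs : 1 < s) (ht : 1 / 2 ≤ t) :
    t ^ (-β) * (if s - 1 < t ∧ t < s + 1 then A else |t - s| ^ (-γ)) ≤
      (2 ^ (β + γ - 1) + 4 ^ β * A) * (s ^ (1 - β - γ) + s ^ (-β) + s ^ (-γ)) *
        (t⁻¹ + 2 * (1 + |t - s|)⁻¹) := by
  set P := s ^ (1 - β - γ) + s ^ (-β) + s ^ (-γ)
  set Q := t⁻¹ + 2 * (1 + |t - s|)⁻¹
  have hs0 : 0 ≤ s := by linarith
  have hP : s ^ (-β) ≤ P := by linarith [rpow_nonneg hs0 (1 - β - γ), rpow_nonneg hs0 (-γ)]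
  have hQ : 0 ≤ Q := by positivity
  rw [add_mul, add_mul]
  split_ifs with hband
  · have hnear : 1 ≤ 2 * (1 + |t - s|)⁻¹ := by
      rw [← div_eq_mul_inv, le_div_iff₀ (by positivity)]
      linarith [(abs_sub_lt_iff.2 ⟨by linarith, by linarith⟩ : |t - s| < 1)]
    calc t ^ (-β) * A ≤ 4 ^ (- -β) * s ^ (-β) * A := by
          gcongr
          exact rpow_le_rpow_mul_of_le_mul (by norm_num) (by linarith) (by linarith) (by linarith)
      _ ≤ 4 ^ β * A * P := by rw [neg_neg, mul_right_comm]; gcongr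
      _ ≤ 4 ^ β * A * P * Q := le_mul_of_one_le_right (by positivity) (by
          linarith [inv_nonneg.2 (by linarith : 0 ≤ t)])
      _ ≤ _ := le_add_of_nonneg_left (by positivity)
  · have hfar : 1 ≤ |t - s| := by
      rw [not_and_or, not_lt, not_lt] at hband
      rcases hband with h | h
      · rw [abs_sub_comm]; exact le_abs.2 (Or.inl (by linarith))
      · exact le_abs.2 (Or.inl (by linarith))
    have hinv : |t - s|⁻¹ ≤ 2 * (1 + |t - s|)⁻¹ := by
      rw [← div_eq_mul_inv, le_div_iff₀ (by positivity), inv_mul_eq_div,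
        div_le_iff₀ (by linarith)]
      linarith
    calc t ^ (-β) * |t - s| ^ (-γ) ≤ 2 ^ (β + γ - 1) * P * (t⁻¹ + |t - s|⁻¹) :=
          rpow_neg_mul_abs_sub_rpow_neg_le hβ hγ hβγ (by linarith) ht hfar
      _ ≤ 2 ^ (β + γ - 1) * P * Q := by gcongr; exact add_le_add le_rfl hinv
      _ ≤ _ := le_add_of_nonneg_right (by positivity)

lemma continuous_inv_one_add_abs_sub (s : ℝ) : Continuous fun t : ℝ => (1 + |t - s|)⁻¹ :=
  (continuous_const.add (continuous_id.sub continuous_const).abs).inv₀ fun t =>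
    (by positivity : (0 : ℝ) < 1 + |t - s|).ne'

lemma integral_inv_one_add_abs_sub {a b s : ℝ} (has : a ≤ s) (hsb : s ≤ b) :
    ∫ t in a..b, (1 + |t - s|)⁻¹ = log (1 + (s - a)) + log (1 + (b - s)) := by
  rw [← intervalIntegral.integral_add_adjacent_intervals
    ((continuous_inv_one_add_abs_sub s).intervalIntegrable a s)
    ((continuous_inv_one_add_abs_sub s).intervalIntegrable s b)]
  have hleft : ∫ t in a..s, (1 + |t - s|)⁻¹ = ∫ t in a..s, ((1 + s) - t)⁻¹ := by
    refine intervalIntegral.integral_congr fun t ht => ?_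
    rw [Set.uIcc_of_le has] at ht
    simp only [abs_of_nonpos (sub_nonpos.2 ht.2)]
    ring_nf
  have hright : ∫ t in s..b, (1 + |t - s|)⁻¹ = ∫ t in s..b, (t - (s - 1))⁻¹ := by
    refine intervalIntegral.integral_congr fun t ht => ?_
    rw [Set.uIcc_of_le hsb] at ht
    simp only [abs_of_nonneg (sub_nonneg.2 ht.1)]
    ring_nf
  rw [hleft, hright, intervalIntegral.integral_comp_sub_left (fun x => x⁻¹),
    intervalIntegral.integral_comp_sub_right (fun x => x⁻¹),
    integral_inv_of_pos (by norm_num) (by linarith),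
    integral_inv_of_pos (by norm_num) (by linarith)]
  ring_nf

lemma intervalIntegrable_inv_of_pos {a b : ℝ} (ha : 0 < a) (hab : a ≤ b) :
    IntervalIntegrable (fun t : ℝ => t⁻¹) volume a b := by
  refine intervalIntegrable_inv_iff.2 (.inr ?_)
  rw [Set.uIcc_of_le hab]
  exact fun h => by linarith [h.1]

lemma integral_inv_add_two_mul_inv_one_add_abs_sub_le {s T : ℝ} (hT : 2 < T)
    (hs : 1 / 2 ≤ s) (hsT : s ≤ T) :
    ∫ t in (1 / 2 : ℝ)..T, (t⁻¹ + 2 * (1 + |t - s|)⁻¹) ≤ 10 * log T := by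
  rw [intervalIntegral.integral_add
      (intervalIntegrable_inv_of_pos (by norm_num) (by linarith))
      (((continuous_inv_one_add_abs_sub s).intervalIntegrable _ _).const_mul 2),
    intervalIntegral.integral_const_mul, integral_inv_of_pos (by norm_num) (by linarith),
    integral_inv_one_add_abs_sub hs hsT]
  have hlog2T : log (2 * T) ≤ 2 * log T := by
    rw [two_mul (log T), ← log_mul (by positivity) (by positivity)]
    exact log_le_log (by positivity) (by nlinarith)
  have h1 : log (T / (1 / 2)) = log (2 * T) := by ring_nf
  have h2 : log (1 + (s - 1 / 2)) ≤ log (2 * T) := log_le_log (by linarith) (by linarith)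
  have h3 : log (1 + (T - s)) ≤ log (2 * T) := log_le_log (by linarith) (by linarith)
  linarith

theorem h_estimate (β γ A : ℝ) (hβ : 0 < β) (hγ : 0 < γ) (hβγ : 1 < β + γ)
    (hA : 0 ≤ A) :
    ∃ C : ℝ, 0 < C ∧ ∀ T : ℝ, 2 < T → ∀ s : ℝ, 1 < s → s < T →
      (∫ t in (1/2 : ℝ)..T,
          t ^ (-β) * (if s - 1 < t ∧ t < s + 1 then A else |t - s| ^ (-γ)))
        ≤ C * Real.log T * (s ^ (1 - β - γ) + s ^ (-β) + s ^ (-γ)) := by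
  set K := 2 ^ (β + γ - 1) + 4 ^ β * A
  refine ⟨10 * K, by positivity, fun T hT s hs hsT => ?_⟩
  set P := s ^ (1 - β - γ) + s ^ (-β) + s ^ (-γ)
  calc _ ≤ ∫ t in (1 / 2 : ℝ)..T, K * P * (t⁻¹ + 2 * (1 + |t - s|)⁻¹) := by
        refine intervalIntegral_mono_on_of_nonneg (by linarith) (fun t ht => ?_) ?_
          (fun t ht => rpow_neg_mul_ite_le hβ.le hγ.le hβγ.le hA hs ht.1.le)
        · exact mul_nonneg (rpow_nonneg (by linarith [ht.1]) _) (by split_ifs <;> positivity)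
        · exact ((intervalIntegrable_inv_of_pos (by norm_num) (by linarith)).add
            (((continuous_inv_one_add_abs_sub s).intervalIntegrable _ _).const_mul 2)).const_mul _
    _ = K * P * ∫ t in (1 / 2 : ℝ)..T, (t⁻¹ + 2 * (1 + |t - s|)⁻¹) :=
        intervalIntegral.integral_const_mul _ _
    _ ≤ K * P * (10 * log T) := by
        gcongr
        exact integral_inv_add_two_mul_inv_one_add_abs_sub_le hT (by linarith) hsT.le
    _ = 10 * K * log T * P := by ring
end

section
/- Suppose M : ℝ → ℝ is locally integrable with |M(t)| ≤ C₀ |t|^{-β} for |t| ≥ 1, a : ℝ → ℝ is bounded with |a(u)| ≤ C₀ |u|^{-γ} for |u| ≥ 1, where β > 1/4, γ > 0, 2β + γ > 3/2, β + γ > 1. Then T^{-1/2} ∫_0^T ∫_0^T M(t) M(s) a(t-s) dt ds → 0 as T → ∞. -/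
/-!
Both weights are dominated by powers: `|a u| ≤ A (1 + |u|)^(-γ)` for all `u`, and
`|M s| ≤ C₀ s^(-β)` for `s ≥ 1`. Fix `ρ < 1/2` above `0`, `1 - 2β` and `2 - 2β - γ`, and put
`σ = ρ - 1 + β`. For `y ≥ 1` the convolution `∫₁^R s^(-β) (1 + |y - s|)^(-γ) ds` is `O(y^σ)`
uniformly in `R`: near the diagonal `y/2 < s < 2y` one has `s^(-β) ≤ 2^β y^(-β)` and integrates
the kernel exactly, while off it `1 + |y - s| ≥ max s y / 2`, which splits the kernel into an
integrable power of `s` times a power of `y`. The piece of `M` on `[0, 1]` only enters through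
its `L¹` norm, so the inner integral is `O(max 1 t ^ σ)` uniformly in `T`, the double integral is
`O(T^ρ)`, and `T^(-1/2) T^ρ → 0`.
-/

open MeasureTheory Real Filter Set

lemma rpow_neg_le_two_rpow_mul_of_half_le {x c q : ℝ} (hx : 0 < x) (hc : x / 2 ≤ c) (hq : 0 ≤ q) :
    c ^ (-q) ≤ 2 ^ q * x ^ (-q) :=
  calc c ^ (-q) ≤ (x / 2) ^ (-q) := rpow_le_rpow_of_nonpos (by positivity) hc (by linarith)
    _ = 2 ^ q * x ^ (-q) := by
      rw [div_rpow hx.le zero_le_two, rpow_neg zero_le_two, div_inv_eq_mul, mul_comm]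

lemma abs_le_mul_one_add_abs_rpow_neg {a : ℝ → ℝ} {A C γ : ℝ} (hγ : 0 ≤ γ)
    (hA : ∀ u, |a u| ≤ A) (hC : ∀ u, 1 ≤ |u| → |a u| ≤ C * |u| ^ (-γ)) (u : ℝ) :
    |a u| ≤ 2 ^ γ * max A C * (1 + |u|) ^ (-γ) := by
  have hA₀ : 0 ≤ max A C := ((abs_nonneg _).trans (hA 0)).trans (le_max_left _ _)
  have hu₀ : 0 < 1 + |u| := by positivity
  rw [mul_right_comm, mul_comm _ (max A C)]
  rcases le_or_gt 1 |u| with hu | hu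
  · calc |a u| ≤ C * |u| ^ (-γ) := hC u hu
      _ ≤ max A C * (2 ^ γ * (1 + |u|) ^ (-γ)) :=
        mul_le_mul (le_max_right _ _) (rpow_neg_le_two_rpow_mul_of_half_le hu₀ (by linarith) hγ)
          (by positivity) hA₀
  · calc |a u| ≤ A * 1 ^ (-γ) := by simpa using hA u
      _ ≤ max A C * (2 ^ γ * (1 + |u|) ^ (-γ)) :=
        mul_le_mul (le_max_left _ _) (rpow_neg_le_two_rpow_mul_of_half_le hu₀ (by linarith) hγ)
          (by positivity) hA₀

lemma continuous_one_add_abs_rpow (q : ℝ) : Continuous fun u : ℝ => (1 + |u|) ^ q :=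
  (continuous_const.add continuous_abs).rpow_const fun u =>
    Or.inl (by positivity : (0:ℝ) < 1 + |u|).ne'

lemma integral_one_add_abs_sub_rpow {q : ℝ} (hq : -1 < q) (y : ℝ) {r : ℝ} (hr : 0 ≤ r) :
    ∫ s in (y - r)..(y + r), (1 + |y - s|) ^ q = 2 * (((1 + r) ^ (q + 1) - 1) / (q + 1)) := by
  have hg : Continuous fun s => (1 + |y - s|) ^ q :=
    (continuous_one_add_abs_rpow q).comp (continuous_sub_left y)
  have half : ∫ u in (0:ℝ)..r, (1 + |u|) ^ q = ((1 + r) ^ (q + 1) - 1) / (q + 1) := by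
    rw [intervalIntegral.integral_congr (g := fun u => (1 + u) ^ q) fun u hu => by
        rw [uIcc_of_le hr] at hu; simp [abs_of_nonneg hu.1],
      intervalIntegral.integral_comp_add_left (fun x => x ^ q), integral_rpow (Or.inl hq)]
    simp
  have left : ∫ s in (y - r)..y, (1 + |y - s|) ^ q = ∫ u in (0:ℝ)..r, (1 + |u|) ^ q := by
    simp [intervalIntegral.integral_comp_sub_left (fun u => (1 + |u|) ^ q) y]
  have right : ∫ s in y..(y + r), (1 + |y - s|) ^ q = ∫ u in (0:ℝ)..r, (1 + |u|) ^ q := by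
    simp_rw [abs_sub_comm y]
    simp [intervalIntegral.integral_comp_sub_right (fun u => (1 + |u|) ^ q) y]
  rw [← intervalIntegral.integral_add_adjacent_intervals (hg.intervalIntegrable _ y)
    (hg.intervalIntegrable y _), left, right, half]
  ring

lemma one_add_abs_sub_rpow_neg_le_of_offDiag {s y γ θ : ℝ} (hs : 0 < s) (hy : 0 < y)
    (hsy : s ≤ y / 2 ∨ 2 * y ≤ s) (hθ : 0 ≤ θ) (hθγ : θ ≤ γ) :
    (1 + |y - s|) ^ (-γ) ≤ 2 ^ γ * (s ^ (-θ) * y ^ (θ - γ)) := by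
  have hm : 0 < max s y := lt_max_of_lt_left hs
  have hmax : max s y / 2 ≤ 1 + |y - s| := by
    rcases hsy with h | h
    · rw [max_eq_right (by linarith)]; linarith [le_abs_self (y - s)]
    · rw [max_eq_left (by linarith)]; linarith [neg_abs_le (y - s)]
  calc (1 + |y - s|) ^ (-γ) ≤ 2 ^ γ * max s y ^ (-γ) :=
        rpow_neg_le_two_rpow_mul_of_half_le hm hmax (by linarith)
    _ = 2 ^ γ * (max s y ^ (-θ) * max s y ^ (θ - γ)) := by rw [← rpow_add hm]; ring_nf
    _ ≤ 2 ^ γ * (s ^ (-θ) * y ^ (θ - γ)) := by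
        refine mul_le_mul_of_nonneg_left (mul_le_mul ?_ ?_ (by positivity) (by positivity))
          (by positivity)
        · exact rpow_le_rpow_of_nonpos hs (le_max_left _ _) (by linarith)
        · exact rpow_le_rpow_of_nonpos hy (le_max_right _ _) (by linarith)

lemma continuousOn_rpow_neg_mul_one_add_abs_sub_rpow_neg (β γ y : ℝ) :
    ContinuousOn (fun s : ℝ => s ^ (-β) * (1 + |y - s|) ^ (-γ)) (Ioi 0) :=
  (continuousOn_id.rpow_const fun _ hs => Or.inl (ne_of_gt hs)).mul
    ((continuous_one_add_abs_rpow (-γ)).comp (continuous_sub_left y)).continuousOn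

lemma integrableOn_rpow_neg_mul_one_add_abs_sub_rpow_neg (β γ y : ℝ) {a : ℝ} (ha : 0 < a) (b : ℝ) :
    IntegrableOn (fun s : ℝ => s ^ (-β) * (1 + |y - s|) ^ (-γ)) (Ioc a b) :=
  ((continuousOn_rpow_neg_mul_one_add_abs_sub_rpow_neg β γ y).mono
    fun _ hs => lt_of_lt_of_le ha hs.1).integrableOn_Icc.mono_set Ioc_subset_Icc_self

lemma setIntegral_rpow_neg_mul_one_add_abs_sub_rpow_neg_diag_le {β γ δ : ℝ} (hβ : 0 ≤ β)
    (hδ : 0 < δ) (hγδ : 1 - γ ≤ δ) {y : ℝ} (hy : 1 ≤ y) (R : ℝ) :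
    ∫ s in Ioc 1 R ∩ Ioo (y / 2) (2 * y), s ^ (-β) * (1 + |y - s|) ^ (-γ)
      ≤ 2 ^ β * (2 * 2 ^ δ / δ) * y ^ (δ - β) := by
  have hy₀ : 0 < y := by linarith
  have hmaj : ∀ s ∈ Ioc 1 R ∩ Ioo (y / 2) (2 * y),
      s ^ (-β) * (1 + |y - s|) ^ (-γ) ≤ 2 ^ β * y ^ (-β) * (1 + |y - s|) ^ (δ - 1) := fun s hs =>
    mul_le_mul (rpow_neg_le_two_rpow_mul_of_half_le hy₀ hs.2.1.le hβ)
      (rpow_le_rpow_of_exponent_le (by linarith [abs_nonneg (y - s)]) (by linarith))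
      (by positivity) (by positivity)
  have hcont : Continuous fun s => 2 ^ β * y ^ (-β) * (1 + |y - s|) ^ (δ - 1) :=
    continuous_const.mul ((continuous_one_add_abs_rpow _).comp (continuous_sub_left y))
  calc ∫ s in Ioc 1 R ∩ Ioo (y / 2) (2 * y), s ^ (-β) * (1 + |y - s|) ^ (-γ)
      ≤ ∫ s in Ioc 1 R ∩ Ioo (y / 2) (2 * y), 2 ^ β * y ^ (-β) * (1 + |y - s|) ^ (δ - 1) :=
        setIntegral_mono_on
          ((integrableOn_rpow_neg_mul_one_add_abs_sub_rpow_neg β γ y one_pos R).mono_set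
            inter_subset_left)
          (hcont.integrableOn_Ioc.mono_set (inter_subset_right.trans Ioo_subset_Ioc_self))
          (measurableSet_Ioc.inter measurableSet_Ioo) hmaj
    _ ≤ ∫ s in Ioc (y - y) (y + y), 2 ^ β * y ^ (-β) * (1 + |y - s|) ^ (δ - 1) :=
        setIntegral_mono_set hcont.integrableOn_Ioc (ae_of_all _ fun s => by positivity)
          (ae_of_all _ fun s hs => ⟨by linarith [hs.2.1], by linarith [hs.2.2]⟩)
    _ = 2 ^ β * y ^ (-β) * (2 * (((1 + y) ^ δ - 1) / δ)) := by
        rw [← intervalIntegral.integral_of_le (by linarith), intervalIntegral.integral_const_mul,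
          integral_one_add_abs_sub_rpow (by linarith) y hy₀.le, sub_add_cancel]
    _ ≤ 2 ^ β * y ^ (-β) * (2 * (2 ^ δ * y ^ δ / δ)) := by
        have : (1 + y) ^ δ ≤ (2 * y) ^ δ := rpow_le_rpow (by linarith) (by linarith) hδ.le
        rw [mul_rpow zero_le_two hy₀.le] at this
        gcongr
        linarith
    _ = 2 ^ β * (2 * 2 ^ δ / δ) * y ^ (δ - β) := by
        rw [sub_eq_neg_add, rpow_add hy₀]; ring

lemma setIntegral_rpow_neg_mul_one_add_abs_sub_rpow_neg_offDiag_le {β γ θ : ℝ} (hθ : 0 ≤ θ)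
    (hθγ : θ ≤ γ) (hβθ : 1 < β + θ) {y : ℝ} (hy : 0 < y) (R : ℝ) :
    ∫ s in Ioc 1 R \ Ioo (y / 2) (2 * y), s ^ (-β) * (1 + |y - s|) ^ (-γ)
      ≤ 2 ^ γ / (β + θ - 1) * y ^ (θ - γ) := by
  have hmaj : ∀ s ∈ Ioc 1 R \ Ioo (y / 2) (2 * y),
      s ^ (-β) * (1 + |y - s|) ^ (-γ) ≤ 2 ^ γ * y ^ (θ - γ) * s ^ (-(β + θ)) := by
    rintro s ⟨⟨hs, -⟩, hsD⟩
    have hs₀ : 0 < s := by linarith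
    have hsy : s ≤ y / 2 ∨ 2 * y ≤ s := by
      by_contra! h; exact hsD ⟨h.1, h.2⟩
    calc s ^ (-β) * (1 + |y - s|) ^ (-γ) ≤ s ^ (-β) * (2 ^ γ * (s ^ (-θ) * y ^ (θ - γ))) :=
          mul_le_mul_of_nonneg_left
            (one_add_abs_sub_rpow_neg_le_of_offDiag hs₀ hy hsy hθ hθγ) (by positivity)
      _ = 2 ^ γ * y ^ (θ - γ) * s ^ (-(β + θ)) := by
          rw [neg_add, rpow_add hs₀]; ring
  have hint : IntegrableOn (fun s : ℝ => 2 ^ γ * y ^ (θ - γ) * s ^ (-(β + θ))) (Ioi 1) :=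
    (integrableOn_Ioi_rpow_of_lt (by linarith) one_pos).const_mul _
  have hsub : Ioc 1 R \ Ioo (y / 2) (2 * y) ⊆ Ioi 1 := sdiff_subset.trans Ioc_subset_Ioi_self
  calc ∫ s in Ioc 1 R \ Ioo (y / 2) (2 * y), s ^ (-β) * (1 + |y - s|) ^ (-γ)
      ≤ ∫ s in Ioc 1 R \ Ioo (y / 2) (2 * y), 2 ^ γ * y ^ (θ - γ) * s ^ (-(β + θ)) :=
        setIntegral_mono_on
          ((integrableOn_rpow_neg_mul_one_add_abs_sub_rpow_neg β γ y one_pos R).mono_set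
            sdiff_subset)
          (hint.mono_set hsub) (measurableSet_Ioc.diff measurableSet_Ioo) hmaj
    _ ≤ ∫ s in Ioi 1, 2 ^ γ * y ^ (θ - γ) * s ^ (-(β + θ)) :=
        setIntegral_mono_set hint
          ((ae_restrict_iff' measurableSet_Ioi).2 (ae_of_all _ fun s (hs : 1 < s) => by
            have : 0 < s := by linarith
            positivity))
          (ae_of_all _ hsub)
    _ = 2 ^ γ / (β + θ - 1) * y ^ (θ - γ) := by
        rw [integral_const_mul, integral_Ioi_rpow_of_lt (by linarith) one_pos, one_rpow,
          show -(β + θ) + 1 = -(β + θ - 1) by ring, neg_div_neg_eq]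
        ring

theorem exists_integral_rpow_neg_mul_one_add_abs_sub_rpow_neg_le {β γ σ : ℝ} (hβ : 0 ≤ β)
    (hγ : 0 ≤ γ) (hβγ : 1 < β + γ) (hσβ : -β < σ) (hσγ : -γ ≤ σ) (hσ : 1 - β - γ < σ) :
    ∃ C, ∀ y, 1 ≤ y → ∀ R, 1 ≤ R →
      ∫ s in (1:ℝ)..R, s ^ (-β) * (1 + |y - s|) ^ (-γ) ≤ C * y ^ σ := by
  set θ := min γ (σ + γ)
  have hθ : 0 ≤ θ := le_min hγ (by linarith)
  have hβθ : 1 < β + θ := by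
    rcases min_choice γ (σ + γ) with h | h <;> simp only [θ, h] <;> linarith
  refine ⟨2 ^ β * (2 * 2 ^ (σ + β) / (σ + β)) + 2 ^ γ / (β + θ - 1), fun y hy R hR => ?_⟩
  have hdiag := setIntegral_rpow_neg_mul_one_add_abs_sub_rpow_neg_diag_le (γ := γ) hβ
    (by linarith : 0 < σ + β) (by linarith) hy R
  have hoff := setIntegral_rpow_neg_mul_one_add_abs_sub_rpow_neg_offDiag_le hθ (min_le_left _ _)
    hβθ (by linarith : 0 < y) R
  have hyθ : y ^ (θ - γ) ≤ y ^ σ :=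
    rpow_le_rpow_of_exponent_le hy (by linarith [min_le_right γ (σ + γ)])
  rw [add_sub_cancel_right] at hdiag
  rw [intervalIntegral.integral_of_le hR, ← integral_inter_add_sdiff measurableSet_Ioo
    (integrableOn_rpow_neg_mul_one_add_abs_sub_rpow_neg β γ y one_pos R), add_mul]
  have hB : 0 ≤ 2 ^ γ / (β + θ - 1) := div_nonneg (by positivity) (by linarith)
  exact (add_le_add hdiag hoff).trans (add_le_add_right (mul_le_mul_of_nonneg_left hyθ hB) _)

lemma one_add_abs_sub_rpow_neg_le_of_mem_Icc {γ s : ℝ} (hγ : 0 ≤ γ) (hs : s ∈ Icc (0:ℝ) 1) (t : ℝ) :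
    (1 + |t - s|) ^ (-γ) ≤ max 1 t ^ (-γ) :=
  rpow_le_rpow_of_nonpos (lt_of_lt_of_le one_pos (le_max_left _ _))
    (max_le (by linarith [abs_nonneg (t - s)]) (by linarith [le_abs_self (t - s), hs.2]))
    (by linarith)

lemma one_add_abs_sub_rpow_neg_le_of_one_le {γ s : ℝ} (hγ : 0 ≤ γ) (hs : 1 ≤ s) (t : ℝ) :
    (1 + |t - s|) ^ (-γ) ≤ (1 + |max 1 t - s|) ^ (-γ) := by
  refine rpow_le_rpow_of_nonpos (by positivity) ?_ (by linarith)
  rcases le_total t 1 with h | h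
  · rw [max_eq_left h, abs_sub_comm, abs_of_nonneg (by linarith), abs_of_nonpos (by linarith)]
    linarith
  · rw [max_eq_right h]

lemma MeasureTheory.LocallyIntegrable.intervalIntegrable_abs_mul {M g : ℝ → ℝ}
    (hM : LocallyIntegrable M) (hg : Continuous g) (b c : ℝ) :
    IntervalIntegrable (fun t => |M t| * g t) volume b c :=
  ((hM.integrableOn_isCompact isCompact_uIcc).intervalIntegrable).abs.mul_continuousOn
    hg.continuousOn

lemma continuous_max_one_rpow (σ : ℝ) : Continuous fun t : ℝ => max 1 t ^ σ :=
  (continuous_const.max continuous_id).rpow_const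
    fun t => Or.inl (lt_of_lt_of_le one_pos (le_max_left 1 t)).ne'

lemma integral_abs_mul_one_add_abs_sub_rpow_neg_le {M : ℝ → ℝ} {C₀ β γ : ℝ}
    (hM : LocallyIntegrable M) (hC₀ : 0 ≤ C₀) (hMb : ∀ t, 1 ≤ t → |M t| ≤ C₀ * t ^ (-β))
    (hγ : 0 ≤ γ) {T : ℝ} (hT : 1 ≤ T) (t : ℝ) :
    ∫ s in (1:ℝ)..T, |M s| * (1 + |t - s|) ^ (-γ)
      ≤ C₀ * ∫ s in (1:ℝ)..T, s ^ (-β) * (1 + |max 1 t - s|) ^ (-γ) := by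
  rw [← intervalIntegral.integral_const_mul]
  refine intervalIntegral.integral_mono_on hT
    (hM.intervalIntegrable_abs_mul ((continuous_one_add_abs_rpow _).comp (continuous_sub_left t))
      1 T) (ContinuousOn.intervalIntegrable ?_) fun s hs => ?_
  · exact continuousOn_const.mul ((continuousOn_rpow_neg_mul_one_add_abs_sub_rpow_neg β γ _).mono
      fun s hs => by rw [uIcc_of_le hT] at hs; exact lt_of_lt_of_le one_pos hs.1)
  · have hs₀ : 0 ≤ s := by linarith [hs.1]
    rw [← mul_assoc]
    exact mul_le_mul (hMb s hs.1) (one_add_abs_sub_rpow_neg_le_of_one_le hγ hs.1 t)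
      (by positivity) (mul_nonneg hC₀ (rpow_nonneg hs₀ _))

theorem exists_abs_integral_mul_sub_le {M a : ℝ → ℝ} {A C₀ β γ σ : ℝ} (hM : LocallyIntegrable M)
    (ha : ∀ u, |a u| ≤ A * (1 + |u|) ^ (-γ)) (hC₀ : 0 ≤ C₀)
    (hMb : ∀ t, 1 ≤ t → |M t| ≤ C₀ * t ^ (-β)) (hβ : 0 ≤ β) (hγ : 0 ≤ γ) (hβγ : 1 < β + γ)
    (hσβ : -β < σ) (hσγ : -γ ≤ σ) (hσ : 1 - β - γ < σ) :
    ∃ B, ∀ T, 1 ≤ T → ∀ t, |∫ s in (0:ℝ)..T, M s * a (t - s)| ≤ B * max 1 t ^ σ := by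
  obtain ⟨C, hC⟩ :=
    exists_integral_rpow_neg_mul_one_add_abs_sub_rpow_neg_le hβ hγ hβγ hσβ hσγ hσ
  set K := ∫ s in (0:ℝ)..1, |M s|
  refine ⟨A * (K + C₀ * C), fun T hT t => ?_⟩
  have hy : 1 ≤ max 1 t := le_max_left _ _
  have hA : 0 ≤ A := by simpa using (abs_nonneg _).trans (ha 0)
  have hint : ∀ b c, IntervalIntegrable (fun s => |M s| * (1 + |t - s|) ^ (-γ)) volume b c :=
    hM.intervalIntegrable_abs_mul ((continuous_one_add_abs_rpow _).comp (continuous_sub_left t))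
  have hnear : ∫ s in (0:ℝ)..1, |M s| * (1 + |t - s|) ^ (-γ) ≤ K * max 1 t ^ σ := by
    rw [← intervalIntegral.integral_mul_const]
    refine intervalIntegral.integral_mono_on zero_le_one (hint 0 1)
      (hM.intervalIntegrable_abs_mul continuous_const 0 1)
      fun s hs => mul_le_mul_of_nonneg_left ?_ (abs_nonneg _)
    exact (one_add_abs_sub_rpow_neg_le_of_mem_Icc hγ hs t).trans
      (rpow_le_rpow_of_exponent_le hy hσγ)
  have hfar : ∫ s in (1:ℝ)..T, |M s| * (1 + |t - s|) ^ (-γ) ≤ C₀ * (C * max 1 t ^ σ) :=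
    (integral_abs_mul_one_add_abs_sub_rpow_neg_le hM hC₀ hMb hγ hT t).trans
      (mul_le_mul_of_nonneg_left (hC _ hy T hT) hC₀)
  calc |∫ s in (0:ℝ)..T, M s * a (t - s)|
      ≤ ∫ s in (0:ℝ)..T, A * (|M s| * (1 + |t - s|) ^ (-γ)) := by
        rw [← Real.norm_eq_abs]
        refine intervalIntegral.norm_integral_le_of_norm_le (by linarith)
          (ae_of_all _ fun s _ => ?_) ((hint 0 T).const_mul A)
        rw [norm_mul, Real.norm_eq_abs, Real.norm_eq_abs, mul_left_comm]
        exact mul_le_mul_of_nonneg_left (ha _) (abs_nonneg _)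
    _ = A * ((∫ s in (0:ℝ)..1, |M s| * (1 + |t - s|) ^ (-γ))
          + ∫ s in (1:ℝ)..T, |M s| * (1 + |t - s|) ^ (-γ)) := by
        rw [intervalIntegral.integral_const_mul,
          intervalIntegral.integral_add_adjacent_intervals (hint 0 1) (hint 1 T)]
    _ ≤ A * (K * max 1 t ^ σ + C₀ * (C * max 1 t ^ σ)) := by gcongr
    _ = A * (K + C₀ * C) * max 1 t ^ σ := by ring

lemma integral_abs_mul_max_one_rpow_le {M : ℝ → ℝ} {C₀ β ρ : ℝ} (hM : LocallyIntegrable M)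
    (hC₀ : 0 ≤ C₀) (hMb : ∀ t, 1 ≤ t → |M t| ≤ C₀ * t ^ (-β)) (hρ : 0 < ρ) {T : ℝ} (hT : 1 ≤ T) :
    ∫ t in (0:ℝ)..T, |M t| * max 1 t ^ (ρ - 1 + β)
      ≤ ((∫ t in (0:ℝ)..1, |M t|) + C₀ / ρ) * T ^ ρ := by
  have hint := hM.intervalIntegrable_abs_mul (continuous_max_one_rpow (ρ - 1 + β))
  have hnear : ∫ t in (0:ℝ)..1, |M t| * max 1 t ^ (ρ - 1 + β) = ∫ t in (0:ℝ)..1, |M t| :=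
    intervalIntegral.integral_congr fun t ht => by
      rw [uIcc_of_le zero_le_one] at ht
      simp [max_eq_left ht.2]
  have hfar : ∫ t in (1:ℝ)..T, |M t| * max 1 t ^ (ρ - 1 + β) ≤ C₀ * ((T ^ ρ - 1) / ρ) := by
    calc ∫ t in (1:ℝ)..T, |M t| * max 1 t ^ (ρ - 1 + β) ≤ ∫ t in (1:ℝ)..T, C₀ * t ^ (ρ - 1) := by
          refine intervalIntegral.integral_mono_on hT (hint 1 T)
            ((intervalIntegral.intervalIntegrable_rpow' (by linarith)).const_mul C₀) fun t ht => ?_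
          have ht₀ : 0 < t := by linarith [ht.1]
          calc |M t| * max 1 t ^ (ρ - 1 + β) ≤ C₀ * t ^ (-β) * t ^ (ρ - 1 + β) := by
                rw [max_eq_right ht.1]
                exact mul_le_mul_of_nonneg_right (hMb t ht.1) (by positivity)
            _ = C₀ * t ^ (ρ - 1) := by rw [mul_assoc, ← rpow_add ht₀]; ring_nf
      _ = C₀ * ((T ^ ρ - 1) / ρ) := by
          rw [intervalIntegral.integral_const_mul, integral_rpow (Or.inl (by linarith))]
          simp
  have hK : 0 ≤ ∫ t in (0:ℝ)..1, |M t| :=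
    intervalIntegral.integral_nonneg zero_le_one fun t _ => abs_nonneg _
  have hTρ : 1 ≤ T ^ ρ := one_le_rpow hT hρ.le
  rw [← intervalIntegral.integral_add_adjacent_intervals (hint 0 1) (hint 1 T), hnear]
  calc (∫ t in (0:ℝ)..1, |M t|) + ∫ t in (1:ℝ)..T, |M t| * max 1 t ^ (ρ - 1 + β)
      ≤ (∫ t in (0:ℝ)..1, |M t|) + C₀ * ((T ^ ρ - 1) / ρ) := by gcongr
    _ ≤ ((∫ t in (0:ℝ)..1, |M t|) + C₀ / ρ) * T ^ ρ := by
        rw [add_mul, mul_div_assoc', div_mul_eq_mul_div]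
        gcongr
        · exact le_mul_of_one_le_right hK hTρ
        · linarith

theorem exists_abs_integral_integral_mul_sub_le_rpow {M a : ℝ → ℝ} {A C₀ β γ ρ : ℝ}
    (hM : LocallyIntegrable M) (ha : ∀ u, |a u| ≤ A * (1 + |u|) ^ (-γ)) (hC₀ : 0 ≤ C₀)
    (hMb : ∀ t, 1 ≤ t → |M t| ≤ C₀ * t ^ (-β)) (hβ : 0 ≤ β) (hγ : 0 ≤ γ) (hβγ : 1 < β + γ)
    (hρ : 0 < ρ) (hρβ : 1 - 2 * β < ρ) (hρβγ : 2 - 2 * β - γ < ρ) :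
    ∃ B, ∀ T, 1 ≤ T →
      |∫ t in (0:ℝ)..T, ∫ s in (0:ℝ)..T, M t * M s * a (t - s)| ≤ B * T ^ ρ := by
  obtain ⟨B, hB⟩ := exists_abs_integral_mul_sub_le (σ := ρ - 1 + β) hM ha hC₀ hMb hβ hγ hβγ
    (by linarith) (by linarith) (by linarith)
  have hB₀ : 0 ≤ B := by simpa using (abs_nonneg _).trans (hB 1 le_rfl 0)
  refine ⟨B * ((∫ t in (0:ℝ)..1, |M t|) + C₀ / ρ), fun T hT => ?_⟩
  calc |∫ t in (0:ℝ)..T, ∫ s in (0:ℝ)..T, M t * M s * a (t - s)|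
      ≤ ∫ t in (0:ℝ)..T, B * (|M t| * max 1 t ^ (ρ - 1 + β)) := by
        rw [← Real.norm_eq_abs]
        refine intervalIntegral.norm_integral_le_of_norm_le (by linarith)
          (ae_of_all _ fun t _ => ?_) ?_
        · simp_rw [mul_assoc, intervalIntegral.integral_const_mul, norm_mul, Real.norm_eq_abs]
          rw [mul_left_comm]
          exact mul_le_mul_of_nonneg_left (hB T hT t) (abs_nonneg _)
        · exact (hM.intervalIntegrable_abs_mul (continuous_max_one_rpow _) 0 T).const_mul B
    _ = B * ∫ t in (0:ℝ)..T, |M t| * max 1 t ^ (ρ - 1 + β) :=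
        intervalIntegral.integral_const_mul _ _
    _ ≤ B * (((∫ t in (0:ℝ)..1, |M t|) + C₀ / ρ) * T ^ ρ) :=
        mul_le_mul_of_nonneg_left (integral_abs_mul_max_one_rpow_le hM hC₀ hMb hρ hT) hB₀
    _ = _ := by ring

lemma tendsto_rpow_neg_mul_of_abs_le_mul_rpow {f : ℝ → ℝ} {p ρ B : ℝ} (hρ : ρ < p)
    (hf : ∀ᶠ T in atTop, |f T| ≤ B * T ^ ρ) : Tendsto (fun T => T ^ (-p) * f T) atTop (nhds 0) := by
  have hlim : Tendsto (fun T : ℝ => B * T ^ (-(p - ρ))) atTop (nhds 0) := by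
    simpa using (tendsto_rpow_neg_atTop (by linarith : 0 < p - ρ)).const_mul B
  refine squeeze_zero_norm' ?_ hlim
  filter_upwards [hf, eventually_gt_atTop 0] with T hT hT₀
  rw [Real.norm_eq_abs, abs_mul, abs_of_pos (rpow_pos_of_pos hT₀ _)]
  calc T ^ (-p) * |f T| ≤ T ^ (-p) * (B * T ^ ρ) := mul_le_mul_of_nonneg_left hT (by positivity)
    _ = B * T ^ (-(p - ρ)) := by rw [neg_sub, sub_eq_neg_add, rpow_add hT₀]; ring

theorem MM_term_tendsto_zero_general (β γ C₀ : ℝ) (hβ : 1/4 < β) (hγ : 0 < γ)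
    (h1 : 3/2 < 2 * β + γ) (h2 : 1 < β + γ) (hC₀ : 0 < C₀)
    (M a : ℝ → ℝ) (hM : LocallyIntegrable M)
    (haBdd : ∃ A : ℝ, ∀ u : ℝ, |a u| ≤ A)
    (hMb : ∀ t : ℝ, 1 ≤ |t| → |M t| ≤ C₀ * |t| ^ (-β))
    (hab : ∀ u : ℝ, 1 ≤ |u| → |a u| ≤ C₀ * |u| ^ (-γ)) :
    Tendsto (fun T : ℝ =>
        T ^ (-(1/2 : ℝ)) * ∫ t in (0:ℝ)..T, ∫ s in (0:ℝ)..T, M t * M s * a (t - s))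
      atTop (nhds 0) := by
  obtain ⟨A, hA⟩ := haBdd
  obtain ⟨ρ, hρ, hρ_lt⟩ := exists_between (max_lt (max_lt (by linarith : 1 - 2 * β < 1 / 2)
    (by linarith : 2 - 2 * β - γ < 1 / 2)) (by norm_num : (0:ℝ) < 1 / 2))
  simp only [max_lt_iff] at hρ
  have hMb' : ∀ t, 1 ≤ t → |M t| ≤ C₀ * t ^ (-β) := fun t ht => by
    simpa only [abs_of_pos (by linarith : 0 < t)] using
      hMb t (by rwa [abs_of_pos (by linarith : 0 < t)])
  obtain ⟨B, hB⟩ := exists_abs_integral_integral_mul_sub_le_rpow hM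
    (abs_le_mul_one_add_abs_rpow_neg hγ.le hA hab) hC₀.le hMb' (by linarith) hγ.le h2
    hρ.2 hρ.1.1 hρ.1.2
  exact tendsto_rpow_neg_mul_of_abs_le_mul_rpow hρ_lt (eventually_atTop.2 ⟨1, hB⟩)

theorem MM_term_tendsto_zero (β γ C₀ : ℝ) (hβ : 1/4 < β) (hγ : 0 < γ)
    (h1 : 3/2 < 2 * β + γ) (h2 : 1 < β + γ) (hC₀ : 0 < C₀)
    (M a : ℝ → ℝ) (hM : LocallyIntegrable M) (ha : Measurable a)
    (haBdd : ∃ A : ℝ, ∀ u : ℝ, |a u| ≤ A)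
    (hMb : ∀ t : ℝ, 1 ≤ |t| → |M t| ≤ C₀ * |t| ^ (-β))
    (hab : ∀ u : ℝ, 1 ≤ |u| → |a u| ≤ C₀ * |u| ^ (-γ)) :
    Tendsto (fun T : ℝ =>
        T ^ (-(1/2 : ℝ)) * ∫ t in (0:ℝ)..T, ∫ s in (0:ℝ)..T, M t * M s * a (t - s))
      atTop (nhds 0) :=
  MM_term_tendsto_zero_general β γ C₀ hβ hγ h1 h2 hC₀ M a hM haBdd hMb hab
end

section
/- Let α ∈ (0,1], η > 0 with α + η > 1, and let r : ℝ → ℝ be bounded with |r(u)| ≤ C₀ |u|^{-α} for |u| ≥ 1. Then there is C > 0 such that for all T > 2 and all τ with 1 < τ < T, ∫_{1/2}^T t^{-η} |r(t - τ)| dt ≤ C · log T · ( T^{1-α-η} + τ^{1-α-η} + τ^{-α} + τ^{-η} ) ≤ C · log T · ( 1 + T^{1-α-η} ). -/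
open MeasureTheory Real intervalIntegral

lemma my_integrable_of_bound {f : ℝ → ℝ} (hf : Measurable f) {a b c : ℝ} (hab : a ≤ b)
    (h : ∀ t ∈ Set.Icc a b, |f t| ≤ c) : IntervalIntegrable f volume a b := by
  rw [intervalIntegrable_iff_integrableOn_Icc_of_le hab]
  apply MeasureTheory.Integrable.mono' (integrable_const c) hf.aestronglyMeasurable.restrict
  filter_upwards [ae_restrict_mem measurableSet_Icc] with t ht
  simpa using h t ht

lemma my_int_rpow_le {p a b : ℝ} (ha : 0 < a) (hab : a ≤ b) :
    ∫ t in a..b, t ^ p ≤ (a ^ (p+1) + b ^ (p+1)) * Real.log (b/a) := by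
  have hb : 0 < b := ha.trans_le hab
  have h0 : (0:ℝ) ∉ Set.uIcc a b := by
    rw [Set.uIcc_of_le hab]; intro h; exact absurd h.1 (by linarith)
  have key : ∀ t ∈ Set.Icc a b, t ^ p ≤ (a^(p+1)+b^(p+1)) * t⁻¹ := by
    intro t ht
    have ht0 : 0 < t := ha.trans_le ht.1
    have h1 : t ^ p = t ^ (p+1) * t⁻¹ := by
      rw [← Real.rpow_neg_one t, ← Real.rpow_add ht0]; ring_nf
    rw [h1]
    have h2 : t ^ (p+1) ≤ a^(p+1) + b^(p+1) := by
      rcases le_or_gt 0 (p+1) with hp | hp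
      · have h3 := Real.rpow_le_rpow ht0.le ht.2 hp
        have ha' : (0:ℝ) ≤ a ^ (p+1) := (Real.rpow_pos_of_pos ha _).le
        linarith
      · have h3 := Real.rpow_le_rpow_of_nonpos ha ht.1 hp.le
        have hb' : (0:ℝ) ≤ b ^ (p+1) := (Real.rpow_pos_of_pos hb _).le
        linarith
    exact mul_le_mul_of_nonneg_right h2 (inv_nonneg.mpr ht0.le)
  calc ∫ t in a..b, t ^ p ≤ ∫ t in a..b, (a^(p+1)+b^(p+1)) * t⁻¹ := by
        apply intervalIntegral.integral_mono_on hab (intervalIntegrable_rpow (Or.inr h0))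
          (((intervalIntegrable_inv_iff).mpr (Or.inr h0)).const_mul _) key
    _ = (a^(p+1)+b^(p+1)) * Real.log (b/a) := by
        rw [intervalIntegral.integral_const_mul, integral_inv_of_pos ha hb]

lemma my_half_rpow {τ x : ℝ} (hτ : 0 < τ) : (τ/2) ^ x = 2^(-x) * τ ^ x := by
  rw [Real.div_rpow hτ.le (by norm_num), Real.rpow_neg (by norm_num)]
  rw [div_eq_mul_inv, mul_comm]

lemma my_halfc_rpow (x : ℝ) : ((1:ℝ)/2) ^ x = 2^(-x) := by
  rw [one_div, Real.inv_rpow (by norm_num), ← Real.rpow_neg (by norm_num)]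

lemma my_int_M_le {α τ a b : ℝ} (hα0 : 0 < α) (hτ : 1 < τ)
    (ha : -τ ≤ a) (hab : a ≤ b) (hb : b ≤ τ) :
    (∫ s in a..b, (max 1 |s|) ^ (-α)) ≤ 2 + 2 * ((1 + τ ^ (1 - α)) * Real.log τ) := by
  have hτ0 : (0:ℝ) < τ := by linarith
  have hcont : Continuous fun s : ℝ => (max 1 |s|) ^ (-α) := by
    apply Continuous.rpow_const (continuous_const.max continuous_abs)
    intro x; left
    have : (1:ℝ) ≤ max 1 |x| := le_max_left _ _
    positivity
  have hint : ∀ u v : ℝ, IntervalIntegrable (fun s => (max 1 |s|) ^ (-α)) volume u v :=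
    fun u v => hcont.intervalIntegrable u v
  have hnn : ∀ s : ℝ, 0 ≤ (max 1 |s|) ^ (-α) := fun s =>
    Real.rpow_nonneg (le_trans zero_le_one (le_max_left _ _)) _
  have h1 : (∫ s in a..b, (max 1 |s|) ^ (-α)) ≤ ∫ s in (-τ)..τ, (max 1 |s|) ^ (-α) :=
    intervalIntegral.integral_mono_interval ha hab hb
      (Filter.Eventually.of_forall fun s => hnn s) (hint _ _)
  have hsplit : (∫ s in (-τ)..τ, (max 1 |s|) ^ (-α)) =
      (∫ s in (-τ)..(-1:ℝ), (max 1 |s|) ^ (-α)) + (∫ s in (-1:ℝ)..1, (max 1 |s|) ^ (-α))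
        + (∫ s in (1:ℝ)..τ, (max 1 |s|) ^ (-α)) := by
    rw [intervalIntegral.integral_add_adjacent_intervals (hint _ _) (hint _ _),
        intervalIntegral.integral_add_adjacent_intervals (hint _ _) (hint _ _)]
  have htail : (∫ s in (1:ℝ)..τ, (max 1 |s|) ^ (-α)) ≤ (1 + τ ^ (1-α)) * Real.log τ := by
    have heq : (∫ s in (1:ℝ)..τ, (max 1 |s|) ^ (-α)) = ∫ s in (1:ℝ)..τ, s ^ (-α) := by
      apply intervalIntegral.integral_congr
      intro s hs
      simp only []
      rw [Set.uIcc_of_le (by linarith : (1:ℝ) ≤ τ)] at hs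
      rw [abs_of_nonneg (by linarith [hs.1]), max_eq_right hs.1]
    rw [heq]
    have h2 := my_int_rpow_le (p := -α) one_pos (le_of_lt hτ)
    have h3 : -α + 1 = 1 - α := by ring
    rw [h3, Real.one_rpow, div_one] at h2
    exact h2
  have hneg : (∫ s in (-τ)..(-1:ℝ), (max 1 |s|) ^ (-α))
      = ∫ s in (1:ℝ)..τ, (max 1 |s|) ^ (-α) := by
    have h4 := intervalIntegral.integral_comp_neg (a := (1:ℝ)) (b := τ)
      (fun s => (max 1 |s|) ^ (-α))
    simp only [abs_neg, neg_neg] at h4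
    exact h4.symm
  have hmid : (∫ s in (-1:ℝ)..1, (max 1 |s|) ^ (-α)) ≤ 2 := by
    calc (∫ s in (-1:ℝ)..1, (max 1 |s|) ^ (-α)) ≤ ∫ _ in (-1:ℝ)..1, (1:ℝ) :=
          intervalIntegral.integral_mono_on (by norm_num) (hint _ _)
            intervalIntegrable_const (fun s _ =>
              Real.rpow_le_one_of_one_le_of_nonpos (le_max_left _ _) (by linarith))
      _ = 2 := by simp; norm_num
  have hL0 : 0 ≤ (1 + τ ^ (1-α)) * Real.log τ := by
    apply mul_nonneg
    · have := Real.rpow_nonneg hτ0.le (1-α); linarith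
    · exact Real.log_nonneg (by linarith)
  linarith [h1, hsplit, hneg, hmid, htail]

lemma my_meas_rpow (c : ℝ) : Measurable fun x : ℝ => x ^ c := by
  have h : (fun x : ℝ => x ^ c) = fun x : ℝ =>
      if x ≤ 0 then (if x = 0 then (if c = 0 then 1 else 0)
        else Real.exp (Real.log x * c) * Real.cos (c * π))
      else Real.exp (Real.log x * c) := by
    funext x
    rcases le_or_gt x 0 with hx | hx
    · rw [if_pos hx, Real.rpow_def_of_nonpos hx]
    · rw [if_neg (not_le.mpr hx), Real.rpow_def_of_pos hx]
  rw [h]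
  apply Measurable.ite (measurableSet_le measurable_id measurable_const)
  · apply Measurable.ite (MeasurableSet.singleton 0) measurable_const
    exact (Real.measurable_log.mul measurable_const).exp.mul measurable_const
  · exact (Real.measurable_log.mul measurable_const).exp
set_option maxHeartbeats 1000000 in
theorem q_estimate (α η C₀ : ℝ) (hα0 : 0 < α) (hα1 : α ≤ 1) (hη : 0 < η)
    (hαη : 1 < α + η) (hC₀ : 0 < C₀)
    (r : ℝ → ℝ) (hr : Measurable r) (hrBdd : ∃ B : ℝ, ∀ u : ℝ, |r u| ≤ B)
    (hrb : ∀ u : ℝ, 1 ≤ |u| → |r u| ≤ C₀ * |u| ^ (-α)) :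
    ∃ C : ℝ, 0 < C ∧ ∀ T : ℝ, 2 < T → ∀ τ : ℝ, 1 < τ → τ < T →
      (∫ t in (1/2 : ℝ)..T, t ^ (-η) * |r (t - τ)|) ≤
        C * Real.log T *
          (T ^ (1 - α - η) + τ ^ (1 - α - η) + τ ^ (-α) + τ ^ (-η)) ∧
      (∫ t in (1/2 : ℝ)..T, t ^ (-η) * |r (t - τ)|) ≤
        C * Real.log T * (1 + T ^ (1 - α - η)) := by
  obtain ⟨B, hB⟩ := hrBdd
  set K : ℝ := max B C₀ with hKdef
  have hK0 : 0 < K := lt_of_lt_of_le hC₀ (le_max_right _ _)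
  have hKr : ∀ u : ℝ, |r u| ≤ K * (max 1 |u|) ^ (-α) := by
    intro u
    rcases le_or_gt 1 |u| with h | h
    · rw [max_eq_right h]
      exact (hrb u h).trans (mul_le_mul_of_nonneg_right (le_max_right _ _)
        (Real.rpow_nonneg (abs_nonneg u) _))
    · rw [max_eq_left h.le, Real.one_rpow, mul_one]
      exact (hB u).trans (le_max_left _ _)
  have h2α : (0:ℝ) < 2 ^ α := Real.rpow_pos_of_pos (by norm_num) _
  have h2η : (0:ℝ) < 2 ^ η := Real.rpow_pos_of_pos (by norm_num) _
  have h2η1 : (0:ℝ) < 2 ^ (η - 1) := Real.rpow_pos_of_pos (by norm_num) _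
  have h2η1' : (2:ℝ) ^ (η - 1) ≤ 2 ^ η :=
    Real.rpow_le_rpow_of_exponent_le (by norm_num) (by linarith)
  set c1 : ℝ := K * (2 ^ α * 2 ^ (η - 1)) with hc1
  set c2 : ℝ := 8 * (K * 2 ^ η) with hc2
  set c3 : ℝ := 2 * (K * 2 ^ α) with hc3
  have hc10 : 0 < c1 := by positivity
  have hc20 : 0 < c2 := by positivity
  have hc30 : 0 < c3 := by positivity
  refine ⟨3 * (c1 + c2 + c3), by positivity, ?_⟩
  intro T hT τ hτ1 hτT
  have hτ0 : (0:ℝ) < τ := by linarith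
  have hT0 : (0:ℝ) < T := by linarith
  set L := Real.log T with hLdef
  set l := Real.log τ with hldef
  have hl0 : 0 ≤ l := Real.log_nonneg (by linarith)
  have hlL : l ≤ L := Real.log_le_log hτ0 (le_of_lt hτT)
  have hLhalf : 1/2 ≤ L := by
    have h2 : Real.log 2 ≤ L := Real.log_le_log (by norm_num) (by linarith)
    nlinarith [Real.log_two_gt_d9]
  have hL0 : 0 ≤ L := by linarith
  have hPa0 : 0 ≤ τ ^ (-α) := Real.rpow_nonneg hτ0.le _
  have hPe0 : 0 ≤ τ ^ (-η) := Real.rpow_nonneg hτ0.le _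
  have hPae0 : 0 ≤ τ ^ (1 - α - η) := Real.rpow_nonneg hτ0.le _
  have hP1a0 : 0 ≤ τ ^ (1 - α) := Real.rpow_nonneg hτ0.le _
  have hTp0 : 0 ≤ T ^ (1 - α - η) := Real.rpow_nonneg hT0.le _
  have hPa1 : τ ^ (-α) ≤ 1 :=
    Real.rpow_le_one_of_one_le_of_nonpos hτ1.le (by linarith)
  have hPe1 : τ ^ (-η) ≤ 1 :=
    Real.rpow_le_one_of_one_le_of_nonpos hτ1.le (by linarith)
  have hPae1 : τ ^ (1 - α - η) ≤ 1 :=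
    Real.rpow_le_one_of_one_le_of_nonpos hτ1.le (by linarith)
  set f : ℝ → ℝ := fun t => t ^ (-η) * |r (t - τ)| with hfdef
  have hfm : Measurable f :=
    (my_meas_rpow (-η)).mul ((hr.comp (measurable_id.sub measurable_const)).abs)
  have hfnn : ∀ t : ℝ, 0 ≤ t → 0 ≤ f t := fun t ht =>
    mul_nonneg (Real.rpow_nonneg ht _) (abs_nonneg _)
  have hfb : ∀ t : ℝ, 1/2 ≤ t → |f t| ≤ (1/2:ℝ) ^ (-η) * K := by
    intro t ht
    have ht0 : (0:ℝ) < t := by linarith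
    rw [abs_of_nonneg (hfnn t ht0.le)]
    have hr1 : |r (t - τ)| ≤ K := by
      have := Real.rpow_le_one_of_one_le_of_nonpos (le_max_left 1 |t - τ|)
        (neg_nonpos.mpr hα0.le)
      nlinarith [hKr (t - τ)]
    have ht2 : t ^ (-η) ≤ (1/2:ℝ) ^ (-η) :=
      Real.rpow_le_rpow_of_nonpos (by norm_num) ht (neg_nonpos.mpr hη.le)
    have hh : (0:ℝ) ≤ t ^ (-η) := Real.rpow_nonneg ht0.le _
    exact mul_le_mul ht2 hr1 (abs_nonneg _) (by positivity)
  have hfint : ∀ a b : ℝ, 1/2 ≤ a → a ≤ b → IntervalIntegrable f volume a b := by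
    intro a b ha hab
    exact my_integrable_of_bound hfm hab (fun t ht => hfb t (le_trans ha ht.1))
  have hcontM : Continuous fun s : ℝ => (max 1 |s|) ^ (-α) := by
    apply Continuous.rpow_const (continuous_const.max continuous_abs)
    intro x; left
    have : (1:ℝ) ≤ max 1 |x| := le_max_left _ _
    positivity
  -- Segment 1 : ∫_{1/2}^{τ/2}
  have hA1 : (∫ t in (1/2:ℝ)..(τ/2), f t) ≤ c1 * ((τ^(-α) + τ^(1-α-η)) * l) := by
    have hab : (1/2:ℝ) ≤ τ/2 := by linarith
    have hpt : ∀ t ∈ Set.Icc (1/2:ℝ) (τ/2), f t ≤ (K * (τ/2)^(-α)) * t^(-η) := by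
      intro t ht
      have ht0 : (0:ℝ) < t := by linarith [ht.1]
      have hM : τ/2 ≤ max 1 |t - τ| := by
        have h7 : τ/2 ≤ |t - τ| := by
          rw [abs_of_nonpos (by linarith [ht.2] : t - τ ≤ 0)]; linarith [ht.2]
        exact le_trans h7 (le_max_right _ _)
      have h5 : (max 1 |t - τ|) ^ (-α) ≤ (τ/2) ^ (-α) :=
        Real.rpow_le_rpow_of_nonpos (by linarith) hM (neg_nonpos.mpr hα0.le)
      have h6 : |r (t - τ)| ≤ K * (τ/2)^(-α) :=
        (hKr _).trans (mul_le_mul_of_nonneg_left h5 hK0.le)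
      calc f t = |r (t - τ)| * t ^ (-η) := mul_comm _ _
        _ ≤ (K * (τ/2)^(-α)) * t^(-η) :=
            mul_le_mul_of_nonneg_right h6 (Real.rpow_nonneg ht0.le _)
    have h0' : (0:ℝ) ∉ Set.uIcc (1/2:ℝ) (τ/2) := by
      rw [Set.uIcc_of_le hab]; intro h; exact absurd h.1 (by norm_num)
    have hint2 : IntervalIntegrable (fun t => (K * (τ/2)^(-α)) * t^(-η))
        volume (1/2) (τ/2) := (intervalIntegrable_rpow (Or.inr h0')).const_mul _
    calc (∫ t in (1/2:ℝ)..(τ/2), f t)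
        ≤ ∫ t in (1/2:ℝ)..(τ/2), (K * (τ/2)^(-α)) * t^(-η) :=
          intervalIntegral.integral_mono_on hab (hfint _ _ le_rfl hab) hint2 hpt
      _ = (K * (τ/2)^(-α)) * ∫ t in (1/2:ℝ)..(τ/2), t^(-η) :=
          intervalIntegral.integral_const_mul _ _
      _ ≤ (K * (τ/2)^(-α)) * (((1/2:ℝ)^(-η+1) + (τ/2)^(-η+1)) * Real.log ((τ/2)/((1:ℝ)/2))) :=
          mul_le_mul_of_nonneg_left (my_int_rpow_le (by norm_num) hab) (by positivity)
      _ = c1 * ((τ^(-α) + τ^(1-α-η)) * l) := by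
          rw [my_half_rpow hτ0, my_half_rpow hτ0, my_halfc_rpow, neg_neg,
            show ((τ/2)/((1:ℝ)/2)) = τ by ring, show -(-η+1) = η-1 by ring]
          have hPP : τ^(-α) * τ^(-η+1) = τ^(1-α-η) := by
            rw [← Real.rpow_add hτ0]; congr 1; ring
          rw [hc1, ← hldef]
          linear_combination (K * 2^α * 2^(η-1) * l) * hPP
  -- Segment 2 : ∫_{τ/2}^{b} for τ/2 ≤ b ≤ 2τ
  have hA2 : ∀ b : ℝ, τ/2 ≤ b → b ≤ 2*τ →
      (∫ t in (τ/2)..b, f t) ≤ (K * (2^η * τ^(-η))) * (2 + 2*((1 + τ^(1-α)) * l)) := by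
    intro b hb1 hb2
    have hτ2 : (0:ℝ) < τ/2 := by linarith
    have hpt : ∀ t ∈ Set.Icc (τ/2) b, f t ≤ (K * (τ/2)^(-η)) * (max 1 |t - τ|)^(-α) := by
      intro t ht
      have ht0 : (0:ℝ) < t := lt_of_lt_of_le hτ2 ht.1
      have h5 : t ^ (-η) ≤ (τ/2) ^ (-η) :=
        Real.rpow_le_rpow_of_nonpos hτ2 ht.1 (neg_nonpos.mpr hη.le)
      have h6 := hKr (t - τ)
      calc f t ≤ (τ/2)^(-η) * (K * (max 1 |t - τ|)^(-α)) :=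
            mul_le_mul h5 h6 (abs_nonneg _) (Real.rpow_nonneg hτ2.le _)
        _ = (K * (τ/2)^(-η)) * (max 1 |t - τ|)^(-α) := by ring
    have hcg : Continuous fun t : ℝ => (K * (τ/2)^(-η)) * (max 1 |t - τ|)^(-α) :=
      continuous_const.mul (hcontM.comp (continuous_id.sub continuous_const))
    calc (∫ t in (τ/2)..b, f t)
        ≤ ∫ t in (τ/2)..b, (K * (τ/2)^(-η)) * (max 1 |t - τ|)^(-α) :=
          intervalIntegral.integral_mono_on hb1 (hfint _ _ (by linarith) hb1)
            (hcg.intervalIntegrable _ _) hpt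
      _ = (K * (τ/2)^(-η)) * ∫ t in (τ/2)..b, (max 1 |t - τ|)^(-α) :=
          intervalIntegral.integral_const_mul _ _
      _ = (K * (τ/2)^(-η)) * ∫ s in (τ/2 - τ)..(b - τ), (max 1 |s|)^(-α) := by
          rw [intervalIntegral.integral_comp_sub_right (fun s => (max 1 |s|)^(-α)) τ]
      _ ≤ (K * (τ/2)^(-η)) * (2 + 2*((1 + τ^(1-α)) * l)) := by
          apply mul_le_mul_of_nonneg_left _ (by positivity)
          exact my_int_M_le hα0 hτ1 (by linarith) (by linarith) (by linarith)
      _ = (K * (2^η * τ^(-η))) * (2 + 2*((1 + τ^(1-α)) * l)) := by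
          rw [my_half_rpow hτ0, neg_neg]
  -- Segment 3 : ∫_{2τ}^{T} (only needed when 2τ < T)
  have hA3 : 2*τ < T → (∫ t in (2*τ)..T, f t) ≤ c3 * (τ^(1-α-η) * L) := by
    intro h2τT
    have hab : 2*τ ≤ T := h2τT.le
    have h2τ0 : (0:ℝ) < 2*τ := by linarith
    have hpt : ∀ t ∈ Set.Icc (2*τ) T, f t ≤ (K * 2^α) * t^(-α-η) := by
      intro t ht
      have ht0 : (0:ℝ) < t := lt_of_lt_of_le h2τ0 ht.1
      have hM : t/2 ≤ max 1 |t - τ| := by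
        have h7 : t/2 ≤ |t - τ| := by
          rw [abs_of_nonneg (by linarith [ht.1] : 0 ≤ t - τ)]; linarith [ht.1]
        exact le_trans h7 (le_max_right _ _)
      have h5 : (max 1 |t - τ|) ^ (-α) ≤ (t/2) ^ (-α) :=
        Real.rpow_le_rpow_of_nonpos (by linarith) hM (neg_nonpos.mpr hα0.le)
      have h6 : |r (t - τ)| ≤ K * (t/2)^(-α) :=
        (hKr _).trans (mul_le_mul_of_nonneg_left h5 hK0.le)
      have hPP : t^(-η) * t^(-α) = t^(-α-η) := by
        rw [← Real.rpow_add ht0]; congr 1; ring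
      calc f t ≤ t^(-η) * (K * (t/2)^(-α)) :=
            mul_le_mul_of_nonneg_left h6 (Real.rpow_nonneg ht0.le _)
        _ = (K * 2^α) * (t^(-η) * t^(-α)) := by
            rw [my_half_rpow ht0, neg_neg]; ring
        _ = (K * 2^α) * t^(-α-η) := by rw [hPP]
    have h0' : (0:ℝ) ∉ Set.uIcc (2*τ) T := by
      rw [Set.uIcc_of_le hab]; intro h; exact absurd h.1 (by linarith)
    have hint2 : IntervalIntegrable (fun t => (K * 2^α) * t^(-α-η))
        volume (2*τ) T := (intervalIntegrable_rpow (Or.inr h0')).const_mul _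
    have hlog1 : (0:ℝ) ≤ Real.log (T / (2*τ)) :=
      Real.log_nonneg ((one_le_div h2τ0).mpr hab)
    have hlog2 : Real.log (T / (2*τ)) ≤ L :=
      Real.log_le_log (by positivity) (div_le_self hT0.le (by linarith))
    have he1 : (2*τ)^(-α-η+1) ≤ τ^(1-α-η) := by
      rw [show (1-α-η) = -α-η+1 by ring]
      exact Real.rpow_le_rpow_of_nonpos hτ0 (by linarith) (by linarith)
    have he2 : T^(-α-η+1) ≤ τ^(1-α-η) := by
      rw [show (1-α-η) = -α-η+1 by ring]
      exact Real.rpow_le_rpow_of_nonpos hτ0 (by linarith) (by linarith)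
    calc (∫ t in (2*τ)..T, f t)
        ≤ ∫ t in (2*τ)..T, (K * 2^α) * t^(-α-η) :=
          intervalIntegral.integral_mono_on hab (hfint _ _ (by linarith) hab) hint2 hpt
      _ = (K * 2^α) * ∫ t in (2*τ)..T, t^(-α-η) :=
          intervalIntegral.integral_const_mul _ _
      _ ≤ (K * 2^α) * (((2*τ)^(-α-η+1) + T^(-α-η+1)) * Real.log (T/(2*τ))) :=
          mul_le_mul_of_nonneg_left (my_int_rpow_le h2τ0 hab) (by positivity)
      _ ≤ (K * 2^α) * ((τ^(1-α-η) + τ^(1-α-η)) * L) := by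
          apply mul_le_mul_of_nonneg_left _ (by positivity)
          apply mul_le_mul (by linarith) hlog2 hlog1 (by linarith)
      _ = c3 * (τ^(1-α-η) * L) := by rw [hc3]; ring
  -- clean per-segment bounds
  have hB1 : (∫ t in (1/2:ℝ)..(τ/2), f t) ≤
      c1 * (L * (τ^(1-α-η) + τ^(-α) + τ^(-η))) := by
    refine hA1.trans ?_
    have h9 : (τ^(-α) + τ^(1-α-η)) * l ≤ (τ^(1-α-η) + τ^(-α) + τ^(-η)) * L :=
      mul_le_mul (by linarith) hlL hl0 (by linarith)
    calc c1 * ((τ^(-α) + τ^(1-α-η)) * l)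
        ≤ c1 * ((τ^(1-α-η) + τ^(-α) + τ^(-η)) * L) :=
          mul_le_mul_of_nonneg_left h9 hc10.le
      _ = c1 * (L * (τ^(1-α-η) + τ^(-α) + τ^(-η))) := by ring
  have hB2 : ∀ b : ℝ, τ/2 ≤ b → b ≤ 2*τ → (∫ t in (τ/2)..b, f t) ≤
      c2 * (L * (τ^(1-α-η) + τ^(-α) + τ^(-η))) := by
    intro b hb1 hb2
    refine (hA2 b hb1 hb2).trans ?_
    have hX : 2 + 2*((1 + τ^(1-α)) * l) ≤ (6 + 2*τ^(1-α)) * L := by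
      nlinarith [mul_le_mul_of_nonneg_left hlL hP1a0, hl0, hlL, hLhalf]
    have hPP2 : τ^(-η) * τ^(1-α) = τ^(1-α-η) := by
      rw [← Real.rpow_add hτ0]; congr 1; ring
    calc (K * (2^η * τ^(-η))) * (2 + 2*((1 + τ^(1-α)) * l))
        ≤ (K * (2^η * τ^(-η))) * ((6 + 2*τ^(1-α)) * L) :=
          mul_le_mul_of_nonneg_left hX (by positivity)
      _ = (K * 2^η * L) * (6 * τ^(-η) + 2 * (τ^(-η) * τ^(1-α))) := by ring
      _ = (K * 2^η * L) * (6 * τ^(-η) + 2 * τ^(1-α-η)) := by rw [hPP2]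
      _ ≤ (K * 2^η * L) * (8 * (τ^(1-α-η) + τ^(-α) + τ^(-η))) := by
          apply mul_le_mul_of_nonneg_left (by linarith) (by positivity)
      _ = c2 * (L * (τ^(1-α-η) + τ^(-α) + τ^(-η))) := by rw [hc2]; ring
  have hB3 : 2*τ < T → (∫ t in (2*τ)..T, f t) ≤
      c3 * (L * (τ^(1-α-η) + τ^(-α) + τ^(-η))) := by
    intro h2τT
    refine (hA3 h2τT).trans ?_
    have h9 : τ^(1-α-η) * L ≤ (τ^(1-α-η) + τ^(-α) + τ^(-η)) * L :=
      mul_le_mul_of_nonneg_right (by linarith) hL0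
    calc c3 * (τ^(1-α-η) * L)
        ≤ c3 * ((τ^(1-α-η) + τ^(-α) + τ^(-η)) * L) :=
          mul_le_mul_of_nonneg_left h9 hc30.le
      _ = c3 * (L * (τ^(1-α-η) + τ^(-α) + τ^(-η))) := by ring
  -- combine
  have hfinal : (∫ t in (1/2:ℝ)..T, f t) ≤
      (c1 + c2 + c3) * (L * (τ^(1-α-η) + τ^(-α) + τ^(-η))) := by
    have hLX : 0 ≤ L * (τ^(1-α-η) + τ^(-α) + τ^(-η)) := by positivity
    rcases le_or_gt T (2*τ) with hcase | hcase
    · have hsplit := intervalIntegral.integral_add_adjacent_intervals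
        (hfint (1/2) (τ/2) le_rfl (by linarith)) (hfint (τ/2) T (by linarith) (by linarith))
      rw [← hsplit]
      have b2 := hB2 T (by linarith) hcase
      nlinarith [hB1, b2, mul_nonneg hc30.le hLX]
    · have hs1 := intervalIntegral.integral_add_adjacent_intervals
        (hfint (1/2) (τ/2) le_rfl (by linarith)) (hfint (τ/2) (2*τ) (by linarith) (by linarith))
      have hs2 := intervalIntegral.integral_add_adjacent_intervals
        (hfint (1/2) (2*τ) le_rfl (by linarith)) (hfint (2*τ) T (by linarith) (by linarith))
      rw [← hs2, ← hs1]
      have b2 := hB2 (2*τ) (by linarith) le_rfl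
      have b3 := hB3 hcase
      nlinarith [hB1, b2, b3]
  have hc0 : (0:ℝ) ≤ c1 + c2 + c3 := by positivity
  have hgoal1 : (∫ t in (1/2:ℝ)..T, f t) ≤ 3 * (c1 + c2 + c3) * L *
      (T ^ (1 - α - η) + τ ^ (1 - α - η) + τ ^ (-α) + τ ^ (-η)) := by
    refine hfinal.trans ?_
    have p1 : 0 ≤ (c1 + c2 + c3) * L * T ^ (1-α-η) :=
      mul_nonneg (mul_nonneg hc0 hL0) hTp0
    have p2 : 0 ≤ (c1 + c2 + c3) * L * (τ^(1-α-η) + τ^(-α) + τ^(-η)) :=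
      mul_nonneg (mul_nonneg hc0 hL0) (by linarith)
    nlinarith [p1, p2]
  have hgoal2 : (∫ t in (1/2:ℝ)..T, f t) ≤ 3 * (c1 + c2 + c3) * L *
      (1 + T ^ (1 - α - η)) := by
    refine hfinal.trans ?_
    have p1 : 0 ≤ (c1 + c2 + c3) * L * T ^ (1-α-η) :=
      mul_nonneg (mul_nonneg hc0 hL0) hTp0
    have p3 : ((c1 + c2 + c3) * L) * (τ^(1-α-η) + τ^(-α) + τ^(-η)) ≤
        ((c1 + c2 + c3) * L) * 3 :=
      mul_le_mul_of_nonneg_left (by linarith) (mul_nonneg hc0 hL0)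
    nlinarith [p1, p3]
  exact ⟨hgoal1, hgoal2⟩
end
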